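/- arXiv:2505.22940 — 5 statements merged into one kernel-verified Lean document; each statement's English description precedes it below -/
import Mathlib

section
/- Notional complementarity: the peak maps are strictly increasing. If 0 < y₁ < y₂ ≤ r_b then m_A(y₁) < m_A(y₂), and if 0 ≤ x₁ < x₂ < r_b then s_A(x₁) < s_A(x₂). -/
/-!
Both peak maps are instances of one problem: maximize `(y - r) * f r` over `a ≤ r ≤ y`, where `f`
is strictly increasing with `f a = 0`; the `s_A` problem is this one reflected by `r ↦ -r`.
The peak `m y` is interior, so `f m = (y - m) * f' m`. For `y₁ < y₂`, comparing each peak with the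
other's optimality gives `(y₂ - y₁) * (f (m y₂) - f (m y₁)) ≥ 0`, hence `m y₁ ≤ m y₂`; equality is
excluded since the first-order condition cannot hold for two values of `y` once `f m > 0`.
-/

open Set

def IsPeak (f : ℝ → ℝ) (a y m : ℝ) : Prop :=
  m ∈ Icc a y ∧ IsMaxOn (fun r => (y - r) * f r) (Icc a y) m

section Peak

variable {f : ℝ → ℝ} {a y m : ℝ}

theorem IsPeak.mem_Ioo (hm : IsPeak f a y m) (hf : StrictMonoOn f (Icc a y)) (ha : f a = 0)
    (hay : a < y) : m ∈ Ioo a y := by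
  obtain ⟨⟨ham, hmy⟩, hmax⟩ := hm
  have hmid : (a + y) / 2 ∈ Icc a y := ⟨by linarith, by linarith⟩
  have hf_mid : 0 < f ((a + y) / 2) := ha ▸ hf (left_mem_Icc.2 hay.le) hmid (by linarith)
  have hpos : 0 < (y - m) * f m :=
    lt_of_lt_of_le (mul_pos (by linarith) hf_mid) (hmax hmid)
  refine ⟨ham.lt_of_ne ?_, hmy.lt_of_ne ?_⟩ <;> rintro rfl
  · simp [ha] at hpos
  · simp at hpos

theorem IsPeak.apply_eq_sub_mul_deriv (hm : IsPeak f a y m) (hm_mem : m ∈ Ioo a y)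
    (hd : DifferentiableAt ℝ f m) : f m = (y - m) * deriv f m := by
  have hder : HasDerivAt (fun r => (y - r) * f r) ((0 - 1) * f m + (y - m) * deriv f m) m :=
    ((hasDerivAt_const m y).sub (hasDerivAt_id m)).mul hd.hasDerivAt
  have := (hm.2.isLocalMax (Icc_mem_nhds hm_mem.1 hm_mem.2)).hasDerivAt_eq_zero hder
  linarith

theorem IsPeak.le_of_lt {y₁ y₂ m₁ m₂ : ℝ} (h₁ : IsPeak f a y₁ m₁) (h₂ : IsPeak f a y₂ m₂)
    (hf : StrictMonoOn f (Icc a y₂)) (hy : y₁ < y₂) : m₁ ≤ m₂ := by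
  by_contra! hlt
  obtain ⟨⟨ham₁, hm₁y⟩, hmax₁⟩ := h₁
  obtain ⟨⟨ham₂, -⟩, hmax₂⟩ := h₂
  have e₁ : (y₁ - m₂) * f m₂ ≤ (y₁ - m₁) * f m₁ := hmax₁ ⟨ham₂, hlt.le.trans hm₁y⟩
  have e₂ : (y₂ - m₁) * f m₁ ≤ (y₂ - m₂) * f m₂ := hmax₂ ⟨ham₁, hm₁y.trans hy.le⟩
  have hsum : (y₂ - y₁) * (f m₁ - f m₂) ≤ 0 := by linarith
  have hflt : f m₂ < f m₁ := hf ⟨ham₂, hlt.le.trans (hm₁y.trans hy.le)⟩ ⟨ham₁, hm₁y.trans hy.le⟩ hlt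
  exact (mul_pos (sub_pos.2 hy) (sub_pos.2 hflt)).not_ge hsum

theorem strictMonoOn_peak {b : ℝ} {peak : ℝ → ℝ} (hf : StrictMonoOn f (Icc a b)) (ha : f a = 0)
    (hd : ∀ x ∈ Ioo a b, DifferentiableAt ℝ f x) (hpeak : ∀ y ∈ Ioc a b, IsPeak f a y (peak y)) :
    StrictMonoOn peak (Ioc a b) := by
  intro y₁ hy₁ y₂ hy₂ hy
  have hf₁ : StrictMonoOn f (Icc a y₁) := hf.mono (Icc_subset_Icc_right hy₁.2)
  have hf₂ : StrictMonoOn f (Icc a y₂) := hf.mono (Icc_subset_Icc_right hy₂.2)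
  refine ((hpeak y₁ hy₁).le_of_lt (hpeak y₂ hy₂) hf₂ hy).lt_of_ne fun heq => ?_
  have hm₁ := (hpeak y₁ hy₁).mem_Ioo hf₁ ha hy₁.1
  have hm₂ := (hpeak y₂ hy₂).mem_Ioo hf₂ ha hy₂.1
  have hdiff := hd _ ⟨hm₁.1, hm₁.2.trans_le hy₁.2⟩
  have foc₁ := (hpeak y₁ hy₁).apply_eq_sub_mul_deriv hm₁ hdiff
  have foc₂ := (hpeak y₂ hy₂).apply_eq_sub_mul_deriv hm₂ (heq ▸ hdiff)
  have hpos : 0 < f (peak y₁) :=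
    ha ▸ hf₁ (left_mem_Icc.2 hy₁.1.le) (Ioo_subset_Icc_self hm₁) hm₁.1
  rw [← heq] at foc₂
  have hderiv : deriv f (peak y₁) = 0 := by
    have : (y₂ - y₁) * deriv f (peak y₁) = 0 := by linarith
    exact (mul_eq_zero.1 this).resolve_left (sub_ne_zero.2 hy.ne')
  rw [hderiv, mul_zero] at foc₁
  exact hpos.ne' foc₁

theorem strictMonoOn_peak_of_strictAntiOn {g : ℝ → ℝ} {a b : ℝ} {peak : ℝ → ℝ}
    (hg : StrictAntiOn g (Icc a b)) (hb : g b = 0) (hd : ∀ x ∈ Ioo a b, DifferentiableAt ℝ g x)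
    (hpeak : ∀ x ∈ Ico a b, peak x ∈ Icc x b ∧
      IsMaxOn (fun r => (r - x) * g r) (Icc x b) (peak x)) :
    StrictMonoOn peak (Ico a b) := by
  have hreflect : StrictMonoOn (fun y => -peak (-y)) (Ioc (-b) (-a)) := by
    refine strictMonoOn_peak (f := fun t => g (-t)) ?_ (by simpa using hb) ?_ ?_
    · intro s hs t ht hst
      exact hg ⟨le_neg.1 ht.2, neg_le.1 ht.1⟩ ⟨le_neg.1 hs.2, neg_le.1 hs.1⟩ (neg_lt_neg hst)
    · intro t ht
      exact (hd (-t) ⟨lt_neg.1 ht.2, neg_lt.1 ht.1⟩).comp t (hasDerivAt_neg t).differentiableAt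
    · intro y hy
      obtain ⟨⟨hxp, hpb⟩, hmax⟩ := hpeak (-y) ⟨le_neg.1 hy.2, neg_lt.1 hy.1⟩
      refine ⟨⟨neg_le_neg hpb, neg_le.1 hxp⟩, fun t ht => ?_⟩
      have := hmax (show -t ∈ Icc (-y) b from ⟨neg_le_neg ht.2, neg_le.1 ht.1⟩)
      simp only [mem_ofPred_eq, neg_neg] at this ⊢
      linarith
  intro x₁ hx₁ x₂ hx₂ hx
  have := hreflect ⟨neg_lt_neg hx₂.2, neg_le_neg hx₂.1⟩ ⟨neg_lt_neg hx₁.2, neg_le_neg hx₁.1⟩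
    (neg_lt_neg hx)
  simpa using this

end Peak
theorem notional_complementarity_general
    (rb : ℝ) (D S mA sA : ℝ → ℝ)
    (hDm : StrictMonoOn D (Icc 0 rb))
    (hD0 : D 0 = 0)
    (hSa : StrictAntiOn S (Icc 0 rb))
    (hSb : S rb = 0)
    (hD' : ∀ x ∈ Icc (0:ℝ) rb, 0 < deriv D x)
    (hS' : ∀ x ∈ Icc (0:ℝ) rb, deriv S x < 0)
    (hmA : ∀ y ∈ Ioc (0:ℝ) rb, mA y ∈ Icc (0:ℝ) y ∧
      (∀ r ∈ Icc (0:ℝ) y, (y - r) * D r ≤ (y - mA y) * D (mA y)) ∧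
      (∀ m ∈ Icc (0:ℝ) y,
        (∀ r ∈ Icc (0:ℝ) y, (y - r) * D r ≤ (y - m) * D m) → m = mA y))
    (hsA : ∀ x ∈ Ico (0:ℝ) rb, sA x ∈ Icc x rb ∧
      (∀ r ∈ Icc x rb, (r - x) * S r ≤ (sA x - x) * S (sA x)) ∧
      (∀ m ∈ Icc x rb,
        (∀ r ∈ Icc x rb, (r - x) * S r ≤ (m - x) * S m) → m = sA x)) :
    (∀ y₁ y₂, 0 < y₁ → y₁ < y₂ → y₂ ≤ rb → mA y₁ < mA y₂) ∧
    (∀ x₁ x₂, 0 ≤ x₁ → x₁ < x₂ → x₂ < rb → sA x₁ < sA x₂) := by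
  have hmA_mono : StrictMonoOn mA (Ioc 0 rb) :=
    strictMonoOn_peak hDm hD0
      (fun x hx => differentiableAt_of_deriv_ne_zero (hD' x (Ioo_subset_Icc_self hx)).ne')
      (fun y hy => ⟨(hmA y hy).1, (hmA y hy).2.1⟩)
  have hsA_mono : StrictMonoOn sA (Ico 0 rb) :=
    strictMonoOn_peak_of_strictAntiOn hSa hSb
      (fun x hx => differentiableAt_of_deriv_ne_zero (hS' x (Ioo_subset_Icc_self hx)).ne)
      (fun x hx => ⟨(hsA x hx).1, (hsA x hx).2.1⟩)
  exact ⟨fun y₁ y₂ h₀ h₁₂ h₂ => hmA_mono ⟨h₀, h₁₂.le.trans h₂⟩ ⟨h₀.trans h₁₂, h₂⟩ h₁₂,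
    fun x₁ x₂ h₀ h₁₂ h₂ => hsA_mono ⟨h₀, h₁₂.trans h₂⟩ ⟨h₀.trans h₁₂.le, h₂⟩ h₁₂⟩

/-- Notional complementarity: the peak maps `m_A` and `s_A` are strictly increasing. -/
theorem notional_complementarity
    (rhat rb Tmax : ℝ) (D S mA sA : ℝ → ℝ)
    (hrhat : 0 < rhat) (hrb : rhat < rb) (hTmax : 0 < Tmax)
    (hDc : ContinuousOn D (Icc 0 rb)) (hDm : StrictMonoOn D (Icc 0 rb))
    (hD0 : D 0 = 0) (hDr : D rhat = Tmax)
    (hSc : ContinuousOn S (Icc 0 rb)) (hSa : StrictAntiOn S (Icc 0 rb))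
    (hSb : S rb = 0) (hSr : S rhat = Tmax)
    (U : Set ℝ) (hUo : IsOpen U) (hU : Icc (0:ℝ) rb ⊆ U)
    (hD2 : ContDiffOn ℝ 2 D U) (hS2 : ContDiffOn ℝ 2 S U)
    (hD' : ∀ x ∈ Icc (0:ℝ) rb, 0 < deriv D x)
    (hD'' : ∀ x ∈ Icc (0:ℝ) rb, deriv (deriv D) x < 0)
    (hS' : ∀ x ∈ Icc (0:ℝ) rb, deriv S x < 0)
    (hS'' : ∀ x ∈ Icc (0:ℝ) rb, deriv (deriv S) x < 0)
    (hmA : ∀ y ∈ Ioc (0:ℝ) rb, mA y ∈ Icc (0:ℝ) y ∧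
      (∀ r ∈ Icc (0:ℝ) y, (y - r) * D r ≤ (y - mA y) * D (mA y)) ∧
      (∀ m ∈ Icc (0:ℝ) y,
        (∀ r ∈ Icc (0:ℝ) y, (y - r) * D r ≤ (y - m) * D m) → m = mA y))
    (hsA : ∀ x ∈ Ico (0:ℝ) rb, sA x ∈ Icc x rb ∧
      (∀ r ∈ Icc x rb, (r - x) * S r ≤ (sA x - x) * S (sA x)) ∧
      (∀ m ∈ Icc x rb,
        (∀ r ∈ Icc x rb, (r - x) * S r ≤ (m - x) * S m) → m = sA x)) :
    (∀ y₁ y₂, 0 < y₁ → y₁ < y₂ → y₂ ≤ rb → mA y₁ < mA y₂) ∧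
    (∀ x₁ x₂, 0 ≤ x₁ → x₁ < x₂ → x₂ < rb → sA x₁ < sA x₂) :=
  notional_complementarity_general rb D S mA sA hDm hD0 hSa hSb hD' hS' hmA hsA
end

section
/- Nash equilibrium characterization: a balanced pair (x, y) (i.e., 0 ≤ x ≤ r̂ ≤ y ≤ r_b with D x = S y) is a Nash equilibrium of the interdealer game if and only if x ≤ m_A(y) and y ≥ s_A(x). -/
/-!
At a balanced pair both dealers earn `(y - x) * D x / 2`. A more aggressive quote (`x' > x`, resp.
`y' < y`) leaves the traded quantity at `D x = S y` and only adds the cost of unmatched orders,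
so it never pays. A less aggressive quote leaves the deviator on the short side, with payoff
`(y - x') * D x' / 2`, resp. `(y' - x) * S y' / 2`. These objectives are concave, being products
of a nonnegative concave monotone factor and a linear factor moving the other way, so retreating
is unprofitable exactly when the current quote lies on the rising side of the objective's
maximizer: `x ≤ m_A(y)` and `s_A(x) ≤ y`. Conversely, a profitable retreat past the maximizer
would make the current quote a second maximizer.
-/

open Set

/-- Interdealer trade quantity `Q(x,y) = min (D x) (S y)`. -/
noncomputable def interQ (D S : ℝ → ℝ) (x y : ℝ) : ℝ := min (D x) (S y)

/-- Payoff of `BD_mm`. -/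
noncomputable def piMM (D S : ℝ → ℝ) (x y : ℝ) : ℝ :=
  (1 / 2) * max (y - x) 0 * interQ D S x y - max (D x - interQ D S x y) 0 * x

/-- Payoff of `BD_rm`. -/
noncomputable def piRM (D S : ℝ → ℝ) (x y : ℝ) : ℝ :=
  (1 / 2) * max (y - x) 0 * interQ D S x y - max (S y - interQ D S x y) 0 * y

/-- Nash equilibrium of the interdealer game. -/
def IsNash (D S : ℝ → ℝ) (rb x y : ℝ) : Prop :=
  0 ≤ x ∧ x ≤ y ∧ y ≤ rb ∧
  (∀ x' ∈ Set.Icc (0:ℝ) y, piMM D S x' y ≤ piMM D S x y) ∧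
  (∀ y' ∈ Set.Icc x rb, piRM D S x y' ≤ piRM D S x y)

lemma ConcaveOn.monotoneOn_of_isMaxOn {s : Set ℝ} {f : ℝ → ℝ} {m : ℝ} (hf : ConcaveOn ℝ s f)
    (hm : m ∈ s) (hmax : IsMaxOn f s m) : MonotoneOn f (s ∩ Iic m) := by
  rintro p ⟨hp, -⟩ q ⟨hq, hqm⟩ hpq
  rcases (mem_Iic.1 hqm).lt_or_eq with hqm | rfl
  · exact hf.left_le_of_le_right'' hp hm hpq hqm (isMaxOn_iff.1 hmax q hq)
  · exact isMaxOn_iff.1 hmax p hp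

lemma ConcaveOn.antitoneOn_of_isMaxOn {s : Set ℝ} {f : ℝ → ℝ} {m : ℝ} (hf : ConcaveOn ℝ s f)
    (hm : m ∈ s) (hmax : IsMaxOn f s m) : AntitoneOn f (s ∩ Ici m) := by
  rintro p ⟨hp, hmp⟩ q ⟨hq, -⟩ hpq
  rcases (mem_Ici.1 hmp).lt_or_eq with hmp | rfl
  · exact hf.right_le_of_le_left'' hm hq hmp hpq (isMaxOn_iff.1 hmax p hp)
  · exact isMaxOn_iff.1 hmax q hq

lemma ConcaveOn.const_sub_mul_of_monotoneOn {s : Set ℝ} {g : ℝ → ℝ} {c : ℝ} (hs : Convex ℝ s)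
    (hg : ConcaveOn ℝ s g) (hg₀ : ∀ r ∈ s, 0 ≤ g r) (hgm : MonotoneOn g s)
    (hsc : ∀ r ∈ s, r ≤ c) : ConcaveOn ℝ s (fun r => (c - r) * g r) :=
  ((concaveOn_const c hs).sub (convexOn_id hs)).mul hg (fun r hr => sub_nonneg.2 (hsc r hr)) hg₀
    (AntitoneOn.antivaryOn (fun _ _ _ _ h => sub_le_sub_left h c) hgm)

lemma ConcaveOn.sub_const_mul_of_antitoneOn {s : Set ℝ} {g : ℝ → ℝ} {c : ℝ} (hs : Convex ℝ s)
    (hg : ConcaveOn ℝ s g) (hg₀ : ∀ r ∈ s, 0 ≤ g r) (hga : AntitoneOn g s)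
    (hsc : ∀ r ∈ s, c ≤ r) : ConcaveOn ℝ s (fun r => (r - c) * g r) :=
  ((concaveOn_id hs).sub (convexOn_const c hs)).mul hg (fun r hr => sub_nonneg.2 (hsc r hr)) hg₀
    (MonotoneOn.antivaryOn (fun _ _ _ _ h => sub_le_sub_right h c) hga)

section Payoffs

variable {D S : ℝ → ℝ} {x y : ℝ}

lemma piMM_eq_of_D_le_S (hxy : x ≤ y) (h : D x ≤ S y) : piMM D S x y = (y - x) * D x / 2 := by
  rw [piMM, interQ, min_eq_left h, sub_self, max_eq_left (sub_nonneg.2 hxy), max_self]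
  ring

lemma piMM_eq_of_S_le_D (hxy : x ≤ y) (h : S y ≤ D x) :
    piMM D S x y = (y - x) * S y / 2 - (D x - S y) * x := by
  rw [piMM, interQ, min_eq_right h, max_eq_left (sub_nonneg.2 hxy), max_eq_left (sub_nonneg.2 h)]
  ring

lemma piRM_eq_of_S_le_D (hxy : x ≤ y) (h : S y ≤ D x) : piRM D S x y = (y - x) * S y / 2 := by
  rw [piRM, interQ, min_eq_right h, sub_self, max_eq_left (sub_nonneg.2 hxy), max_self]
  ring

lemma piRM_eq_of_D_le_S (hxy : x ≤ y) (h : D x ≤ S y) :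
    piRM D S x y = (y - x) * D x / 2 - (S y - D x) * y := by
  rw [piRM, interQ, min_eq_left h, max_eq_left (sub_nonneg.2 hxy), max_eq_left (sub_nonneg.2 h)]
  ring

lemma piMM_le_of_balanced_of_le {x' : ℝ} (hbal : D x = S y) (hDx : 0 ≤ D x) (hx' : 0 ≤ x')
    (hxx' : x ≤ x') (hx'y : x' ≤ y) (hD : D x ≤ D x') : piMM D S x' y ≤ piMM D S x y := by
  rw [piMM_eq_of_S_le_D hx'y (hbal ▸ hD), piMM_eq_of_D_le_S (hxx'.trans hx'y) hbal.le, ← hbal]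
  nlinarith [mul_nonneg (sub_nonneg.2 hD) hx', mul_le_mul_of_nonneg_right hxx' hDx]

lemma piRM_le_of_balanced_of_le {y' : ℝ} (hbal : D x = S y) (hSy : 0 ≤ S y) (hy' : 0 ≤ y')
    (hxy' : x ≤ y') (hy'y : y' ≤ y) (hS : S y ≤ S y') : piRM D S x y' ≤ piRM D S x y := by
  rw [piRM_eq_of_D_le_S hxy' (hbal ▸ hS), piRM_eq_of_S_le_D (hxy'.trans hy'y) hbal.ge, hbal]
  nlinarith [mul_nonneg (sub_nonneg.2 hS) hy', mul_le_mul_of_nonneg_right hy'y hSy]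

end Payoffs

theorem forall_piMM_le_iff {D S : ℝ → ℝ} {x y m : ℝ} (hDm : MonotoneOn D (Icc 0 y))
    (hDc : ConcaveOn ℝ (Icc 0 y) D) (hD0 : D 0 = 0) (hbal : D x = S y) (hx : x ∈ Icc 0 y)
    (hm : m ∈ Icc 0 y) (hmax : IsMaxOn (fun r => (y - r) * D r) (Icc 0 y) m)
    (huniq : ∀ m' ∈ Icc 0 y, IsMaxOn (fun r => (y - r) * D r) (Icc 0 y) m' → m' = m) :
    (∀ x' ∈ Icc 0 y, piMM D S x' y ≤ piMM D S x y) ↔ x ≤ m := by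
  have hD₀ : ∀ r ∈ Icc 0 y, 0 ≤ D r := fun r hr =>
    hD0 ▸ hDm (left_mem_Icc.2 (hr.1.trans hr.2)) hr hr.1
  have hretreat : ∀ x' ∈ Icc 0 y, x' ≤ x → piMM D S x' y = (y - x') * D x' / 2 :=
    fun x' hx' h => piMM_eq_of_D_le_S hx'.2 (hbal ▸ hDm hx' hx h)
  constructor
  · intro hnash
    by_contra! hmx
    have hxmax : IsMaxOn (fun r => (y - r) * D r) (Icc 0 y) x := by
      have := hnash m hm
      rw [hretreat m hm hmx.le, hretreat x hx le_rfl] at this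
      exact isMaxOn_iff.2 fun r hr => (isMaxOn_iff.1 hmax r hr).trans (by linarith)
    exact hmx.ne' (huniq x hx hxmax)
  · intro hxm x' hx'
    rcases le_or_gt x' x with h | h
    · have hconc := hDc.const_sub_mul_of_monotoneOn (convex_Icc 0 y) hD₀ hDm fun r hr => hr.2
      have := hconc.monotoneOn_of_isMaxOn hm hmax ⟨hx', h.trans hxm⟩ ⟨hx, hxm⟩ h
      rw [hretreat x' hx' h, hretreat x hx le_rfl]
      linarith
    · exact piMM_le_of_balanced_of_le hbal (hD₀ x hx) hx'.1 h.le hx'.2 (hDm hx hx' h.le)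

theorem forall_piRM_le_iff {D S : ℝ → ℝ} {x y m rb : ℝ} (hSa : AntitoneOn S (Icc x rb))
    (hSc : ConcaveOn ℝ (Icc x rb) S) (hSb : S rb = 0) (hbal : D x = S y) (hx0 : 0 ≤ x)
    (hy : y ∈ Icc x rb) (hm : m ∈ Icc x rb)
    (hmax : IsMaxOn (fun r => (r - x) * S r) (Icc x rb) m)
    (huniq : ∀ m' ∈ Icc x rb, IsMaxOn (fun r => (r - x) * S r) (Icc x rb) m' → m' = m) :
    (∀ y' ∈ Icc x rb, piRM D S x y' ≤ piRM D S x y) ↔ m ≤ y := by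
  have hS₀ : ∀ r ∈ Icc x rb, 0 ≤ S r := fun r hr =>
    hSb ▸ hSa hr (right_mem_Icc.2 (hr.1.trans hr.2)) hr.2
  have hretreat : ∀ y' ∈ Icc x rb, y ≤ y' → piRM D S x y' = (y' - x) * S y' / 2 :=
    fun y' hy' h => piRM_eq_of_S_le_D hy'.1 (hbal ▸ hSa hy hy' h)
  constructor
  · intro hnash
    by_contra! hym
    have hymax : IsMaxOn (fun r => (r - x) * S r) (Icc x rb) y := by
      have := hnash m hm
      rw [hretreat m hm hym.le, hretreat y hy le_rfl] at this
      exact isMaxOn_iff.2 fun r hr => (isMaxOn_iff.1 hmax r hr).trans (by linarith)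
    exact hym.ne (huniq y hy hymax)
  · intro hmy y' hy'
    rcases le_or_gt y y' with h | h
    · have hconc := hSc.sub_const_mul_of_antitoneOn (convex_Icc x rb) hS₀ hSa fun r hr => hr.1
      have := hconc.antitoneOn_of_isMaxOn hm hmax ⟨hy, hmy⟩ ⟨hy', hmy.trans h⟩ h
      rw [hretreat y' hy' h, hretreat y hy le_rfl]
      linarith
    · exact piRM_le_of_balanced_of_le hbal (hS₀ y hy) (hx0.trans hy'.1) hy'.1 h.le
        (hSa hy' hy h.le)

theorem nash_characterization_general
    (rhat rb : ℝ) (D S mA sA : ℝ → ℝ)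
    (hrhat : 0 < rhat) (hrb : rhat < rb)
    (hDc : ContinuousOn D (Icc 0 rb)) (hDm : StrictMonoOn D (Icc 0 rb))
    (hD0 : D 0 = 0)
    (hSc : ContinuousOn S (Icc 0 rb)) (hSa : StrictAntiOn S (Icc 0 rb))
    (hSb : S rb = 0)
    (hD'' : ∀ x ∈ Icc (0:ℝ) rb, deriv (deriv D) x < 0)
    (hS'' : ∀ x ∈ Icc (0:ℝ) rb, deriv (deriv S) x < 0)
    (hmA : ∀ y ∈ Ioc (0:ℝ) rb, mA y ∈ Icc (0:ℝ) y ∧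
      (∀ r ∈ Icc (0:ℝ) y, (y - r) * D r ≤ (y - mA y) * D (mA y)) ∧
      (∀ m ∈ Icc (0:ℝ) y,
        (∀ r ∈ Icc (0:ℝ) y, (y - r) * D r ≤ (y - m) * D m) → m = mA y))
    (hsA : ∀ x ∈ Ico (0:ℝ) rb, sA x ∈ Icc x rb ∧
      (∀ r ∈ Icc x rb, (r - x) * S r ≤ (sA x - x) * S (sA x)) ∧
      (∀ m ∈ Icc x rb,
        (∀ r ∈ Icc x rb, (r - x) * S r ≤ (m - x) * S m) → m = sA x)) :
    ∀ x y, 0 ≤ x → x ≤ rhat → rhat ≤ y → y ≤ rb → D x = S y →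
      (IsNash D S rb x y ↔ (x ≤ mA y ∧ sA x ≤ y)) := by
  intro x y hx0 hxr hry hyb hbal
  have hxy : x ≤ y := hxr.trans hry
  have hy_sub : Icc 0 y ⊆ Icc 0 rb := Icc_subset_Icc_right hyb
  have hx_sub : Icc x rb ⊆ Icc 0 rb := Icc_subset_Icc_left hx0
  -- `strictConcaveOn_of_deriv2_neg'` needs no differentiability hypothesis: a negative value of
  -- `deriv (deriv D)` is not the junk value `0`, so `deriv D` is differentiable there.
  have hDconc : ConcaveOn ℝ (Icc 0 rb) D :=
    (strictConcaveOn_of_deriv2_neg' (convex_Icc 0 rb) hDc hD'').concaveOn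
  have hSconc : ConcaveOn ℝ (Icc 0 rb) S :=
    (strictConcaveOn_of_deriv2_neg' (convex_Icc 0 rb) hSc hS'').concaveOn
  obtain ⟨hmA_mem, hmA_max, hmA_uniq⟩ := hmA y ⟨hrhat.trans_le hry, hyb⟩
  obtain ⟨hsA_mem, hsA_max, hsA_uniq⟩ := hsA x ⟨hx0, hxr.trans_lt hrb⟩
  rw [IsNash,
    forall_piMM_le_iff (hDm.monotoneOn.mono hy_sub) (hDconc.subset hy_sub (convex_Icc 0 y))
      hD0 hbal ⟨hx0, hxy⟩ hmA_mem (isMaxOn_iff.2 hmA_max)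
      fun m hm h => hmA_uniq m hm (isMaxOn_iff.1 h),
    forall_piRM_le_iff (hSa.antitoneOn.mono hx_sub) (hSconc.subset hx_sub (convex_Icc x rb))
      hSb hbal hx0 ⟨hxy, hyb⟩ hsA_mem (isMaxOn_iff.2 hsA_max)
      fun m hm h => hsA_uniq m hm (isMaxOn_iff.1 h)]
  simp only [hx0, hxy, hyb, true_and]

/-- Nash equilibrium characterization: a balanced pair `(x, y)` is a Nash equilibrium
iff `x ≤ m_A(y)` and `y ≥ s_A(x)`. -/
theorem nash_characterization
    (rhat rb Tmax : ℝ) (D S mA sA : ℝ → ℝ)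
    (hrhat : 0 < rhat) (hrb : rhat < rb) (hTmax : 0 < Tmax)
    (hDc : ContinuousOn D (Icc 0 rb)) (hDm : StrictMonoOn D (Icc 0 rb))
    (hD0 : D 0 = 0) (hDr : D rhat = Tmax)
    (hSc : ContinuousOn S (Icc 0 rb)) (hSa : StrictAntiOn S (Icc 0 rb))
    (hSb : S rb = 0) (hSr : S rhat = Tmax)
    (U : Set ℝ) (hUo : IsOpen U) (hU : Icc (0:ℝ) rb ⊆ U)
    (hD2 : ContDiffOn ℝ 2 D U) (hS2 : ContDiffOn ℝ 2 S U)
    (hD' : ∀ x ∈ Icc (0:ℝ) rb, 0 < deriv D x)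
    (hD'' : ∀ x ∈ Icc (0:ℝ) rb, deriv (deriv D) x < 0)
    (hS' : ∀ x ∈ Icc (0:ℝ) rb, deriv S x < 0)
    (hS'' : ∀ x ∈ Icc (0:ℝ) rb, deriv (deriv S) x < 0)
    (hmA : ∀ y ∈ Ioc (0:ℝ) rb, mA y ∈ Icc (0:ℝ) y ∧
      (∀ r ∈ Icc (0:ℝ) y, (y - r) * D r ≤ (y - mA y) * D (mA y)) ∧
      (∀ m ∈ Icc (0:ℝ) y,
        (∀ r ∈ Icc (0:ℝ) y, (y - r) * D r ≤ (y - m) * D m) → m = mA y))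
    (hsA : ∀ x ∈ Ico (0:ℝ) rb, sA x ∈ Icc x rb ∧
      (∀ r ∈ Icc x rb, (r - x) * S r ≤ (sA x - x) * S (sA x)) ∧
      (∀ m ∈ Icc x rb,
        (∀ r ∈ Icc x rb, (r - x) * S r ≤ (m - x) * S m) → m = sA x)) :
    ∀ x y, 0 ≤ x → x ≤ rhat → rhat ≤ y → y ≤ rb → D x = S y →
      (IsNash D S rb x y ↔ (x ≤ mA y ∧ sA x ≤ y)) :=
  nash_characterization_general rhat rb D S mA sA hrhat hrb hDc hDm hD0 hSc hSa hSb hD'' hS'' hmA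
    hsA
end

section
/- Joint profit maximization is an equilibrium: if T* ∈ (0, T_max) maximizes the joint profit function π(T) := (s T − d T) · T over [0, T_max], then the balanced pair (d T*, s T*) is a Nash equilibrium of the interdealer game. -/
open Set

/-!
At the balanced pair `(d T*, s T*)` both quotes clear the same quantity `T*`, so each dealer
earns half the joint profit `π(T*)`. A dealer who deviates either rations the trade to some
`T ≤ T*` — and then, by the monotonicity of `D` and `S`, earns at most half of `π(T)`, which is
at most half of `π(T*)` — or overshoots the cleared quantity, which only narrows the spread and
adds an inventory cost.
-/

def jointProfit (d s : ℝ → ℝ) (T : ℝ) : ℝ := (s T - d T) * T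

section Payoffs

variable {D S : ℝ → ℝ} {x y : ℝ}

theorem piMM_eq_of_le (h : D x ≤ S y) (hxy : x ≤ y) : piMM D S x y = (y - x) * D x / 2 := by
  rw [piMM, interQ, min_eq_left h, max_eq_left (sub_nonneg.mpr hxy), sub_self, max_self]
  ring

theorem piRM_eq_of_ge (h : S y ≤ D x) (hxy : x ≤ y) : piRM D S x y = (y - x) * S y / 2 := by
  rw [piRM, interQ, min_eq_right h, max_eq_left (sub_nonneg.mpr hxy), sub_self, max_self]
  ring

theorem piMM_le_of_ge (h : S y ≤ D x) (hx : 0 ≤ x) :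
    piMM D S x y ≤ max (y - x) 0 * S y / 2 := by
  rw [piMM, interQ, min_eq_right h]
  nlinarith [mul_nonneg (sub_nonneg.mpr h) hx, le_max_right (D x - S y) 0]

theorem piRM_le_of_le (h : D x ≤ S y) (hy : 0 ≤ y) :
    piRM D S x y ≤ max (y - x) 0 * D x / 2 := by
  rw [piRM, interQ, min_eq_left h]
  nlinarith [mul_nonneg (sub_nonneg.mpr h) hy, le_max_right (S y - D x) 0]

end Payoffs

section BestResponse

variable {D S d s : ℝ → ℝ} {rhat rb Tmax : ℝ}

theorem piMM_le_jointProfit_of_le (hDm : StrictMonoOn D (Icc 0 rb))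
    (hSa : StrictAntiOn S (Icc 0 rb))
    (hd : ∀ T ∈ Icc (0:ℝ) Tmax, d T ∈ Icc (0:ℝ) rhat ∧ D (d T) = T)
    (hs : ∀ T ∈ Icc (0:ℝ) Tmax, s T ∈ Icc rhat rb ∧ S (s T) = T)
    {x y : ℝ} (hx : x ∈ Icc 0 y) (hy : y ≤ rb) (hT : D x ∈ Icc 0 Tmax)
    (hle : D x ≤ S y) : piMM D S x y ≤ jointProfit d s (D x) / 2 := by
  obtain ⟨⟨hd0, hdr⟩, hDd⟩ := hd _ hT
  obtain ⟨⟨hsr, hsb⟩, hSs⟩ := hs _ hT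
  have hdx : d (D x) = x :=
    hDm.injOn ⟨hd0, hdr.trans (hsr.trans hsb)⟩ ⟨hx.1, hx.2.trans hy⟩ hDd
  have hys : y ≤ s (D x) :=
    (hSa.le_iff_ge ⟨hd0.trans (hdr.trans hsr), hsb⟩ ⟨hx.1.trans hx.2, hy⟩).mp (by rwa [hSs])
  rw [piMM_eq_of_le hle hx.2, jointProfit, hdx]
  gcongr
  exact hT.1

theorem piRM_le_jointProfit_of_ge (hDm : StrictMonoOn D (Icc 0 rb))
    (hSa : StrictAntiOn S (Icc 0 rb))
    (hd : ∀ T ∈ Icc (0:ℝ) Tmax, d T ∈ Icc (0:ℝ) rhat ∧ D (d T) = T)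
    (hs : ∀ T ∈ Icc (0:ℝ) Tmax, s T ∈ Icc rhat rb ∧ S (s T) = T)
    {x y : ℝ} (hx : x ∈ Icc 0 rb) (hy : y ∈ Icc x rb) (hT : S y ∈ Icc 0 Tmax)
    (hle : S y ≤ D x) : piRM D S x y ≤ jointProfit d s (S y) / 2 := by
  obtain ⟨⟨hd0, hdr⟩, hDd⟩ := hd _ hT
  obtain ⟨⟨hsr, hsb⟩, hSs⟩ := hs _ hT
  have hsy : s (S y) = y :=
    hSa.injOn ⟨hd0.trans (hdr.trans hsr), hsb⟩ ⟨hx.1.trans hy.1, hy.2⟩ hSs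
  have hdx : d (S y) ≤ x :=
    (hDm.le_iff_le ⟨hd0, hdr.trans (hsr.trans hsb)⟩ hx).mp (by rwa [hDd])
  rw [piRM_eq_of_ge hle hy.1, jointProfit, hsy]
  gcongr
  exact hT.1

theorem piMM_le_of_isMaxOn (hDm : StrictMonoOn D (Icc 0 rb)) (hD0 : D 0 = 0)
    (hSa : StrictAntiOn S (Icc 0 rb))
    (hd : ∀ T ∈ Icc (0:ℝ) Tmax, d T ∈ Icc (0:ℝ) rhat ∧ D (d T) = T)
    (hs : ∀ T ∈ Icc (0:ℝ) Tmax, s T ∈ Icc rhat rb ∧ S (s T) = T)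
    {T : ℝ} (hT : T ∈ Icc 0 Tmax) (hmax : IsMaxOn (jointProfit d s) (Icc 0 Tmax) T)
    {x : ℝ} (hx : x ∈ Icc 0 (s T)) : piMM D S x (s T) ≤ piMM D S (d T) (s T) := by
  obtain ⟨⟨hd0, hdr⟩, hDd⟩ := hd T hT
  obtain ⟨⟨hsr, hsb⟩, hSs⟩ := hs T hT
  have hxrb : x ∈ Icc 0 rb := ⟨hx.1, hx.2.trans hsb⟩
  rw [piMM_eq_of_le (hDd.trans hSs.symm).le (hdr.trans hsr), hDd]
  rcases le_or_gt (D x) T with hle | hgt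
  · have hDx : D x ∈ Icc 0 Tmax :=
      ⟨hD0 ▸ hDm.monotoneOn ⟨le_rfl, hx.1.trans hxrb.2⟩ hxrb hx.1, hle.trans hT.2⟩
    calc piMM D S x (s T)
        ≤ jointProfit d s (D x) / 2 :=
          piMM_le_jointProfit_of_le hDm hSa hd hs hx hsb hDx (by rwa [hSs])
      _ ≤ jointProfit d s T / 2 := by gcongr; exact isMaxOn_iff.mp hmax _ hDx
  · have hdx : d T < x :=
      (hDm.lt_iff_lt ⟨hd0, hdr.trans (hsr.trans hsb)⟩ hxrb).mp (by rwa [hDd])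
    calc piMM D S x (s T)
        ≤ max (s T - x) 0 * S (s T) / 2 := piMM_le_of_ge (by rw [hSs]; exact hgt.le) hx.1
      _ ≤ (s T - d T) * T / 2 := by
          rw [hSs]
          gcongr
          · exact hT.1
          · exact max_le (by linarith) (by linarith)

theorem piRM_le_of_isMaxOn (hDm : StrictMonoOn D (Icc 0 rb)) (hSa : StrictAntiOn S (Icc 0 rb))
    (hSb : S rb = 0)
    (hd : ∀ T ∈ Icc (0:ℝ) Tmax, d T ∈ Icc (0:ℝ) rhat ∧ D (d T) = T)
    (hs : ∀ T ∈ Icc (0:ℝ) Tmax, s T ∈ Icc rhat rb ∧ S (s T) = T)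
    {T : ℝ} (hT : T ∈ Icc 0 Tmax) (hmax : IsMaxOn (jointProfit d s) (Icc 0 Tmax) T)
    {y : ℝ} (hy : y ∈ Icc (d T) rb) : piRM D S (d T) y ≤ piRM D S (d T) (s T) := by
  obtain ⟨⟨hd0, hdr⟩, hDd⟩ := hd T hT
  obtain ⟨⟨hsr, hsb⟩, hSs⟩ := hs T hT
  have hyrb : y ∈ Icc 0 rb := ⟨hd0.trans hy.1, hy.2⟩
  rw [piRM_eq_of_ge (hSs.trans hDd.symm).le (hdr.trans hsr), hSs]
  rcases le_or_gt (S y) T with hle | hgt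
  · have hSy : S y ∈ Icc 0 Tmax :=
      ⟨hSb ▸ hSa.antitoneOn hyrb ⟨hyrb.1.trans hyrb.2, le_rfl⟩ hy.2, hle.trans hT.2⟩
    calc piRM D S (d T) y
        ≤ jointProfit d s (S y) / 2 :=
          piRM_le_jointProfit_of_ge hDm hSa hd hs
            ⟨hd0, hdr.trans (hsr.trans hsb)⟩ hy hSy (by rwa [hDd])
      _ ≤ jointProfit d s T / 2 := by gcongr; exact isMaxOn_iff.mp hmax _ hSy
  · have hys : y < s T :=
      (hSa.lt_iff_gt ⟨hd0.trans (hdr.trans hsr), hsb⟩ hyrb).mp (by rwa [hSs])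
    calc piRM D S (d T) y
        ≤ max (y - d T) 0 * D (d T) / 2 := piRM_le_of_le (by rw [hDd]; exact hgt.le) hyrb.1
      _ ≤ (s T - d T) * T / 2 := by
          rw [hDd]
          gcongr
          · exact hT.1
          · exact max_le (by linarith) (by linarith)

end BestResponse

theorem jpm_is_equilibrium_general
    (rhat rb Tmax : ℝ) (D S d s : ℝ → ℝ)
    (hDm : StrictMonoOn D (Icc 0 rb)) (hD0 : D 0 = 0)
    (hSa : StrictAntiOn S (Icc 0 rb)) (hSb : S rb = 0)
    (hd : ∀ T ∈ Icc (0:ℝ) Tmax, d T ∈ Icc (0:ℝ) rhat ∧ D (d T) = T)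
    (hs : ∀ T ∈ Icc (0:ℝ) Tmax, s T ∈ Icc rhat rb ∧ S (s T) = T)
    (Tstar : ℝ) (hTstar : Tstar ∈ Ioo (0:ℝ) Tmax)
    (hmax : ∀ T ∈ Icc (0:ℝ) Tmax,
      (s T - d T) * T ≤ (s Tstar - d Tstar) * Tstar) :
    IsNash D S rb (d Tstar) (s Tstar) := by
  have hT : Tstar ∈ Icc 0 Tmax := Ioo_subset_Icc_self hTstar
  have hjpm : IsMaxOn (jointProfit d s) (Icc 0 Tmax) Tstar := isMaxOn_iff.mpr hmax
  obtain ⟨⟨hx0, hxr⟩, -⟩ := hd Tstar hT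
  obtain ⟨⟨hyr, hyb⟩, -⟩ := hs Tstar hT
  refine ⟨hx0, hxr.trans hyr, hyb, fun x hx ↦ ?_, fun y hy ↦ ?_⟩
  · exact piMM_le_of_isMaxOn hDm hD0 hSa hd hs hT hjpm hx
  · exact piRM_le_of_isMaxOn hDm hSa hSb hd hs hT hjpm hy

/-- Joint profit maximization is an equilibrium: if `T* ∈ (0, T_max)` maximizes
`(s T − d T) · T` over `[0, T_max]`, then `(d T*, s T*)` is a Nash equilibrium. -/
theorem jpm_is_equilibrium
    (rhat rb Tmax : ℝ) (D S d s : ℝ → ℝ)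
    (hrhat : 0 < rhat) (hrb : rhat < rb) (hTmax : 0 < Tmax)
    (hDc : ContinuousOn D (Icc 0 rb)) (hDm : StrictMonoOn D (Icc 0 rb))
    (hD0 : D 0 = 0) (hDr : D rhat = Tmax)
    (hSc : ContinuousOn S (Icc 0 rb)) (hSa : StrictAntiOn S (Icc 0 rb))
    (hSb : S rb = 0) (hSr : S rhat = Tmax)
    (U : Set ℝ) (hUo : IsOpen U) (hU : Icc (0:ℝ) rb ⊆ U)
    (hD2 : ContDiffOn ℝ 2 D U) (hS2 : ContDiffOn ℝ 2 S U)
    (hD' : ∀ x ∈ Icc (0:ℝ) rb, 0 < deriv D x)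
    (hD'' : ∀ x ∈ Icc (0:ℝ) rb, deriv (deriv D) x < 0)
    (hS' : ∀ x ∈ Icc (0:ℝ) rb, deriv S x < 0)
    (hS'' : ∀ x ∈ Icc (0:ℝ) rb, deriv (deriv S) x < 0)
    (hd : ∀ T ∈ Icc (0:ℝ) Tmax, d T ∈ Icc (0:ℝ) rhat ∧ D (d T) = T)
    (hs : ∀ T ∈ Icc (0:ℝ) Tmax, s T ∈ Icc rhat rb ∧ S (s T) = T)
    (Tstar : ℝ) (hTstar : Tstar ∈ Ioo (0:ℝ) Tmax)
    (hmax : ∀ T ∈ Icc (0:ℝ) Tmax,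
      (s T - d T) * T ≤ (s Tstar - d Tstar) * Tstar) :
    IsNash D S rb (d Tstar) (s Tstar) :=
  jpm_is_equilibrium_general rhat rb Tmax D S d s hDm hD0 hSa hSb hd hs Tstar hTstar hmax
end

section
/- Existence of equilibrium with client funding commitments: fix a ∈ [0, r_b] and b ∈ [0, r_b], and let the feasible sets be R_mm := [a, r_b] and R_rm := [0, b]. Then there exists a pair (x, y) ∈ R_mm × R_rm such that π_mm(x', y) ≤ π_mm(x, y) for all x' ∈ R_mm and π_rm(x, y') ≤ π_rm(x, y) for all y' ∈ R_rm; that is, a Nash equilibrium in client repo rates exists when one or both broker-dealers is subject to a funding commitment. -/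
open Set

/-! Let `y` be a best response of rm to the lowest admissible quote `a` of mm. If `S y ≤ D a`
or `y ≤ a`, raising the quote above `a` can only hurt mm, so `(a, y)` is an equilibrium.
Otherwise note that wherever `x ≤ y` and `D x ≤ S y`, rm's payoff is an affine function of `y`
minus the concave function `S y * y`, hence convex, so its maximum over `[a, w]` is attained at
an endpoint. Taking `w` to be the matched quote `S w = D a` or the cap `b`, rm also has a best
response in one of the cases above, or at `b` with `D a ≤ S b`. In the last case mm has a best
response `x` against `b` with `D x ≤ S b`, which raises rm's payoff at `b`; quotes up to `x`
earn rm at most zero, and convexity on `[x, b]` keeps `b` a best response to `x`. -/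

lemma concaveOn_of_contDiffOn_of_deriv2_nonpos {f : ℝ → ℝ} {s U : Set ℝ} (hs : Convex ℝ s)
    (hU : IsOpen U) (hsU : s ⊆ U) (hf : ContDiffOn ℝ 2 f U)
    (hf'' : ∀ x ∈ interior s, deriv (deriv f) x ≤ 0) : ConcaveOn ℝ s f := by
  have hint : interior s ⊆ U := interior_subset.trans hsU
  refine concaveOn_of_deriv2_nonpos hs (hf.continuousOn.mono hsU)
    ((hf.differentiableOn (by norm_num)).mono hint)
    (((hf.deriv_of_isOpen (m := 1) hU (by norm_num)).differentiableOn one_ne_zero).mono hint)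
    fun x hx => ?_
  simpa only [Function.iterate_succ_apply', Function.iterate_zero_apply] using hf'' x hx

lemma ConcaveOn.mul_id {f : ℝ → ℝ} {s : Set ℝ} (hf : ConcaveOn ℝ s f) (hs : s ⊆ Ici 0)
    (hf_anti : AntitoneOn f s) (hf₀ : ∀ x ∈ s, 0 ≤ f x) :
    ConcaveOn ℝ s (fun x => f x * x) :=
  hf.mul (concaveOn_id hf.1) hf₀ hs (hf_anti.antivaryOn monotoneOn_id)

section Payoffs

variable {D S : ℝ → ℝ} {a x y : ℝ}

lemma piRM_nonpos_of_le (hy : 0 ≤ y) (h : y ≤ x) : piRM D S x y ≤ 0 := by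
  unfold piRM
  rw [max_eq_right (sub_nonpos.2 h)]
  nlinarith [mul_nonneg (le_max_right (S y - interQ D S x y) 0) hy]

lemma piRM_zero_right (hx : 0 ≤ x) : piRM D S x 0 = 0 := by
  unfold piRM
  rw [max_eq_right (by linarith : (0:ℝ) - x ≤ 0)]
  ring

lemma piRM_eq_of_le (hxy : x ≤ y) (hDS : D x ≤ S y) :
    piRM D S x y = 3 / 2 * D x * y - 1 / 2 * x * D x - S y * y := by
  unfold piRM interQ
  rw [min_eq_left hDS, max_eq_left (sub_nonneg.2 hxy), max_eq_left (sub_nonneg.2 hDS)]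
  ring

lemma piRM_eq_piMM_sub (hDS : D x ≤ S y) :
    piRM D S x y = piMM D S x y - (S y - D x) * y := by
  unfold piRM piMM interQ
  rw [min_eq_left hDS, sub_self, max_self, max_eq_left (sub_nonneg.2 hDS)]
  ring

lemma piMM_le_piMM_of_le (ha : 0 ≤ a) (hax : a ≤ x) (hD : D a ≤ D x) (hS : 0 ≤ S y)
    (h : S y ≤ D a ∨ y ≤ a) : piMM D S x y ≤ piMM D S a y := by
  unfold piMM interQ
  rcases h with hshort | hya
  · rw [min_eq_right hshort, min_eq_right (hshort.trans hD),
      max_eq_left (sub_nonneg.2 hshort), max_eq_left (sub_nonneg.2 (hshort.trans hD))]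
    have hspread : max (y - x) 0 ≤ max (y - a) 0 := max_le_max (by linarith) le_rfl
    nlinarith [mul_le_mul_of_nonneg_right hspread hS,
      mul_le_mul (sub_le_sub_right hD (S y)) hax ha (by linarith)]
  · rw [max_eq_right (by linarith : y - x ≤ 0), max_eq_right (sub_nonpos.2 hya)]
    have hexcess : D a - min (D a) (S y) ≤ D x - min (D x) (S y) := by
      rcases le_total (D a) (S y) with hmatch | hexceed
      · rw [min_eq_left hmatch, sub_self]; exact sub_nonneg.2 (min_le_left _ _)
      · rw [min_eq_right hexceed, min_eq_right (hexceed.trans hD)]; linarith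
    nlinarith [mul_le_mul (max_le_max hexcess le_rfl) hax ha (le_max_right _ _)]

end Payoffs

section Equilibrium

variable {D S : ℝ → ℝ} {rb a b : ℝ}

lemma piRM_le_max_of_mem_Icc {x y w : ℝ} (hSy : ConcaveOn ℝ (Icc 0 rb) (fun y => S y * y))
    (hS : AntitoneOn S (Icc 0 rb)) (hx : 0 ≤ x) (hw : w ≤ rb) (hDS : D x ≤ S w)
    (hy : y ∈ Icc x w) : piRM D S x y ≤ max (piRM D S x x) (piRM D S x w) := by
  have hsub : Icc x w ⊆ Icc 0 rb := Icc_subset_Icc hx hw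
  have hconvex : ConvexOn ℝ (Icc x w)
      (fun u => 3 / 2 * D x * u - 1 / 2 * x * D x - S u * u) :=
    (((LinearMap.mulLeft ℝ (3 / 2 * D x)).convexOn (convex_Icc x w)).add_const
      (-(1 / 2 * x * D x))).sub (hSy.subset hsub (convex_Icc x w)) |>.congr
      fun u _ => by simp only [Pi.sub_apply, Pi.add_apply, LinearMap.mulLeft_apply]; ring
  have hformula : ∀ u ∈ Icc x w,
      piRM D S x u = 3 / 2 * D x * u - 1 / 2 * x * D x - S u * u := fun u hu =>
    piRM_eq_of_le hu.1 (hDS.trans (hS (hsub hu) (hsub ⟨hy.1.trans hy.2, le_rfl⟩) hu.2))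
  have hxw : x ≤ w := hy.1.trans hy.2
  rw [hformula y hy, hformula x ⟨le_rfl, hxw⟩, hformula w ⟨hxw, le_rfl⟩]
  exact hconvex.le_max_of_mem_Icc ⟨le_rfl, hxw⟩ ⟨hxw, le_rfl⟩ hy

lemma exists_isMaxOn_piMM_of_le {y : ℝ} (hDc : ContinuousOn D (Icc a rb))
    (hD : MonotoneOn D (Icc a rb)) (ha : 0 ≤ a) (har : a ≤ rb) (hDS : D a ≤ S y)
    (hS : 0 ≤ S y) :
    ∃ x ∈ Icc a rb, D x ≤ S y ∧ IsMaxOn (fun x => piMM D S x y) (Icc a rb) x := by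
  have hcont : ContinuousOn (fun x => piMM D S x y) (Icc a rb) := by
    unfold piMM interQ
    fun_prop
  obtain ⟨z, hz, hzmax⟩ := isCompact_Icc.exists_isMaxOn (nonempty_Icc.2 har) hcont
  by_cases hzS : D z ≤ S y
  · exact ⟨z, hz, hzS, hzmax⟩
  obtain ⟨x, hx, hxS⟩ := intermediate_value_Icc hz.1 (hDc.mono (Icc_subset_Icc le_rfl hz.2))
    ⟨hDS, (not_le.1 hzS).le⟩
  have hxI : x ∈ Icc a rb := ⟨hx.1, hx.2.trans hz.2⟩
  have hzx : piMM D S z y ≤ piMM D S x y :=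
    piMM_le_piMM_of_le (ha.trans hx.1) hx.2 (hD hxI hz hx.2) hS (Or.inl hxS.ge)
  exact ⟨x, hxI, hxS.le, isMaxOn_iff.2 fun x' hx' => (hzmax hx').trans hzx⟩

lemma exists_isMaxOn_piRM (hSc : ContinuousOn S (Icc 0 rb))
    (hSy : ConcaveOn ℝ (Icc 0 rb) (fun y => S y * y)) (hS : AntitoneOn S (Icc 0 rb))
    (ha : 0 ≤ a) (hb : 0 ≤ b) (hbr : b ≤ rb) :
    ∃ y ∈ Icc 0 b, IsMaxOn (piRM D S a) (Icc 0 b) y ∧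
      ((S y ≤ D a ∨ y ≤ a) ∨ (y = b ∧ D a ≤ S b)) := by
  have hcont : ContinuousOn (piRM D S a) (Icc 0 b) := by
    have := hSc.mono (Icc_subset_Icc le_rfl hbr)
    unfold piRM interQ
    fun_prop
  obtain ⟨y, hy, hymax⟩ := isCompact_Icc.exists_isMaxOn (nonempty_Icc.2 hb) hcont
  by_cases hshort : S y ≤ D a ∨ y ≤ a
  · exact ⟨y, hy, hymax, Or.inl hshort⟩
  obtain ⟨hDS, hay⟩ : D a < S y ∧ a < y := by simpa only [not_or, not_le] using hshort
  obtain ⟨w, hw, hDw, hw'⟩ : ∃ w ∈ Icc y b, D a ≤ S w ∧ (S w ≤ D a ∨ w = b) := by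
    by_cases hSb : D a ≤ S b
    · exact ⟨b, ⟨hy.2, le_rfl⟩, hSb, Or.inr rfl⟩
    obtain ⟨w, hw, hSw⟩ := intermediate_value_Icc' hy.2
      (hSc.mono (Icc_subset_Icc hy.1 hbr)) ⟨(not_le.1 hSb).le, hDS.le⟩
    exact ⟨w, hw, hSw.ge, Or.inl hSw.le⟩
  rcases le_max_iff.1 (piRM_le_max_of_mem_Icc hSy hS ha (hw.2.trans hbr) hDw ⟨hay.le, hw.1⟩)
    with hya | hyw
  · exact ⟨a, ⟨ha, hay.le.trans hy.2⟩, isMaxOn_iff.2 fun y' hy' => (hymax hy').trans hya,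
      Or.inl (Or.inr le_rfl)⟩
  · exact ⟨w, ⟨hy.1.trans hw.1, hw.2⟩, isMaxOn_iff.2 fun y' hy' => (hymax hy').trans hyw,
      hw'.imp Or.inl fun hwb => ⟨hwb, hwb ▸ hDw⟩⟩

lemma exists_equilibrium_of_isMaxOn_piRM_cap (hDc : ContinuousOn D (Icc 0 rb))
    (hD : MonotoneOn D (Icc 0 rb)) (hSy : ConcaveOn ℝ (Icc 0 rb) (fun y => S y * y))
    (hS : AntitoneOn S (Icc 0 rb)) (hS₀ : 0 ≤ S b) (ha : 0 ≤ a) (har : a ≤ rb) (hb : 0 ≤ b)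
    (hbr : b ≤ rb) (hDS : D a ≤ S b) (hbmax : IsMaxOn (piRM D S a) (Icc 0 b) b) :
    ∃ x ∈ Icc a rb, IsMaxOn (fun x => piMM D S x b) (Icc a rb) x ∧
      IsMaxOn (piRM D S x) (Icc 0 b) b := by
  have hsub : Icc a rb ⊆ Icc 0 rb := Icc_subset_Icc ha le_rfl
  obtain ⟨x, hx, hxS, hxmax⟩ :=
    exists_isMaxOn_piMM_of_le (hDc.mono hsub) (hD.mono hsub) ha har hDS hS₀
  -- `piRM = piMM - (S b - D x) * b`: both terms improve when mm moves from `a` to `x`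
  have hgain : piRM D S a b ≤ piRM D S x b := by
    rw [piRM_eq_piMM_sub hDS, piRM_eq_piMM_sub hxS]
    have hmm : piMM D S a b ≤ piMM D S x b := hxmax ⟨le_rfl, har⟩
    nlinarith [mul_le_mul_of_nonneg_right (hD ⟨ha, har⟩ (hsub hx) hx.1) hb]
  have hpos : 0 ≤ piRM D S x b := by
    have h0 : piRM D S a 0 ≤ piRM D S a b := hbmax ⟨le_rfl, hb⟩
    rw [piRM_zero_right ha] at h0
    exact h0.trans hgain
  refine ⟨x, hx, hxmax, isMaxOn_iff.2 fun y hy => ?_⟩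
  rcases le_total y x with hyx | hxy
  · exact (piRM_nonpos_of_le hy.1 hyx).trans hpos
  · refine (piRM_le_max_of_mem_Icc hSy hS (ha.trans hx.1) hbr hxS ⟨hxy, hy.2⟩).trans ?_
    exact max_le ((piRM_nonpos_of_le (ha.trans hx.1) le_rfl).trans hpos) le_rfl

end Equilibrium

theorem funding_commitment_equilibrium_general
    (rb : ℝ) (D S : ℝ → ℝ)
    (hDc : ContinuousOn D (Icc 0 rb)) (hDm : StrictMonoOn D (Icc 0 rb))
    (hSc : ContinuousOn S (Icc 0 rb)) (hSa : StrictAntiOn S (Icc 0 rb))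
    (hSb : S rb = 0)
    (U : Set ℝ) (hUo : IsOpen U) (hU : Icc (0:ℝ) rb ⊆ U)
    (hS2 : ContDiffOn ℝ 2 S U)
    (hS'' : ∀ x ∈ Icc (0:ℝ) rb, deriv (deriv S) x < 0)
    (a b : ℝ) (ha : a ∈ Icc (0:ℝ) rb) (hb : b ∈ Icc (0:ℝ) rb) :
    ∃ x ∈ Icc a rb, ∃ y ∈ Icc (0:ℝ) b,
      (∀ x' ∈ Icc a rb, piMM D S x' y ≤ piMM D S x y) ∧
      (∀ y' ∈ Icc (0:ℝ) b, piRM D S x y' ≤ piRM D S x y) := by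
  obtain ⟨ha0, har⟩ := ha
  obtain ⟨hb0, hbr⟩ := hb
  have hD : MonotoneOn D (Icc 0 rb) := hDm.monotoneOn
  have hS : AntitoneOn S (Icc 0 rb) := hSa.antitoneOn
  have hS₀ : ∀ y ∈ Icc 0 rb, 0 ≤ S y := fun y hy =>
    hSb ▸ hS hy ⟨ha0.trans har, le_rfl⟩ hy.2
  have hSy : ConcaveOn ℝ (Icc 0 rb) (fun y => S y * y) :=
    (concaveOn_of_contDiffOn_of_deriv2_nonpos (convex_Icc 0 rb) hUo hU hS2
      fun x hx => (hS'' x (interior_subset hx)).le).mul_id (fun _ hy => hy.1) hS hS₀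
  obtain ⟨y, hy, hymax, hshort | ⟨rfl, hDS⟩⟩ := exists_isMaxOn_piRM hSc hSy hS ha0 hb0 hbr
  · refine ⟨a, ⟨le_rfl, har⟩, y, hy, fun x' hx' => ?_, fun y' hy' => hymax hy'⟩
    exact piMM_le_piMM_of_le ha0 hx'.1 (hD ⟨ha0, har⟩ ⟨ha0.trans hx'.1, hx'.2⟩ hx'.1)
      (hS₀ y ⟨hy.1, hy.2.trans hbr⟩) hshort
  · obtain ⟨x, hx, hxmax, hymax'⟩ := exists_equilibrium_of_isMaxOn_piRM_cap hDc hD hSy hS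
      (hS₀ y ⟨hb0, hbr⟩) ha0 har hb0 hbr hDS hymax
    exact ⟨x, hx, y, hy, fun x' hx' => hxmax hx', fun y' hy' => hymax' hy'⟩

/-- Existence of equilibrium with client funding commitments: with feasible sets
`R_mm = [a, r_b]` and `R_rm = [0, b]`, a Nash equilibrium in client repo rates
exists. -/
theorem funding_commitment_equilibrium
    (rhat rb Tmax : ℝ) (D S : ℝ → ℝ)
    (hrhat : 0 < rhat) (hrb : rhat < rb) (hTmax : 0 < Tmax)
    (hDc : ContinuousOn D (Icc 0 rb)) (hDm : StrictMonoOn D (Icc 0 rb))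
    (hD0 : D 0 = 0) (hDr : D rhat = Tmax)
    (hSc : ContinuousOn S (Icc 0 rb)) (hSa : StrictAntiOn S (Icc 0 rb))
    (hSb : S rb = 0) (hSr : S rhat = Tmax)
    (U : Set ℝ) (hUo : IsOpen U) (hU : Icc (0:ℝ) rb ⊆ U)
    (hD2 : ContDiffOn ℝ 2 D U) (hS2 : ContDiffOn ℝ 2 S U)
    (hD' : ∀ x ∈ Icc (0:ℝ) rb, 0 < deriv D x)
    (hD'' : ∀ x ∈ Icc (0:ℝ) rb, deriv (deriv D) x < 0)
    (hS' : ∀ x ∈ Icc (0:ℝ) rb, deriv S x < 0)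
    (hS'' : ∀ x ∈ Icc (0:ℝ) rb, deriv (deriv S) x < 0)
    (a b : ℝ) (ha : a ∈ Icc (0:ℝ) rb) (hb : b ∈ Icc (0:ℝ) rb) :
    ∃ x ∈ Icc a rb, ∃ y ∈ Icc (0:ℝ) b,
      (∀ x' ∈ Icc a rb, piMM D S x' y ≤ piMM D S x y) ∧
      (∀ y' ∈ Icc (0:ℝ) b, piRM D S x y' ≤ piRM D S x y) :=
  funding_commitment_equilibrium_general rb D S hDc hDm hSc hSa hSb U hUo hU hS2 hS'' a b ha hb
end

section
/- At a joint-profit-maximizing interior volume, each dealer's no-inventory objective has a strictly inventory-reducing slope: if T* ∈ (0, T_max) maximizes π(T) := (s T − d T) · T over [0, T_max], then with x* := d T* and y* := s T*, the derivative of r ↦ (y* − r) · D r at r = x* is strictly positive, and the derivative of r ↦ (r − x*) · S r at r = y* is strictly negative; in particular x* ≤ m_A(y*) and y* ≥ s_A(x*). -/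
open Set

/-- Continuity of a right inverse of a strictly monotone function at an interior point. -/
lemma contAt_of_rightInv {F fi : ℝ → ℝ} {a b x0 : ℝ}
    (hF : StrictMonoOn F (Icc a b)) (hx0 : x0 ∈ Ioo a b)
    (hfi : ∀ᶠ T in nhds (F x0), fi T ∈ Icc a b ∧ F (fi T) = T) :
    ContinuousAt fi (F x0) := by
  have hx0' : x0 ∈ Icc a b := Ioo_subset_Icc_self hx0
  have hfix0 : fi (F x0) = x0 := by
    obtain ⟨hm, he⟩ := hfi.self_of_nhds
    exact hF.injOn hm hx0' he
  rw [ContinuousAt, hfix0, Metric.tendsto_nhds]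
  intro ε εpos
  set a' := max a (x0 - ε / 2) with ha'def
  set b' := min b (x0 + ε / 2) with hb'def
  have ha'1 : a ≤ a' := le_max_left _ _
  have ha'2 : a' < x0 := max_lt hx0.1 (by linarith)
  have hb'2 : x0 < b' := lt_min hx0.2 (by linarith)
  have hb'1 : b' ≤ b := min_le_left _ _
  have ha'm : a' ∈ Icc a b := ⟨ha'1, le_trans ha'2.le (le_trans hb'2.le hb'1)⟩
  have hb'm : b' ∈ Icc a b := ⟨le_trans ha'1 (le_trans ha'2.le hb'2.le), hb'1⟩
  have hFa : F a' < F x0 := hF ha'm hx0' ha'2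
  have hFb : F x0 < F b' := hF hx0' hb'm hb'2
  have hnb : Ioo (F a') (F b') ∈ nhds (F x0) := Ioo_mem_nhds hFa hFb
  filter_upwards [hnb, hfi] with T hT hfiT
  obtain ⟨hm, he⟩ := hfiT
  have h1 : a' < fi T := by
    by_contra h
    push_neg at h
    have := hF.monotoneOn hm ha'm h
    rw [he] at this
    linarith [hT.1]
  have h2 : fi T < b' := by
    by_contra h
    push_neg at h
    have := hF.monotoneOn hb'm hm h
    rw [he] at this
    linarith [hT.2]
  rw [Real.dist_eq, abs_lt]
  constructor
  · have : x0 - ε / 2 ≤ a' := le_max_right _ _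
    linarith
  · have : b' ≤ x0 + ε / 2 := min_le_right _ _
    linarith

/-- At a joint-profit-maximizing interior volume `T*`, with `x* = d T*` and `y* = s T*`,
each dealer's no-inventory objective has a strictly inventory-reducing slope:
`(d/dr)[(y* − r) D r]` is strictly positive at `r = x*`, and `(d/dr)[(r − x*) S r]` is
strictly negative at `r = y*`; moreover `x* ≤ m_A(y*)` and `y* ≥ s_A(x*)`. -/
theorem jpm_interior_slopes
    (rhat rb Tmax : ℝ) (D S d s mA sA : ℝ → ℝ)
    (hrhat : 0 < rhat) (hrb : rhat < rb) (hTmax : 0 < Tmax)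
    (hDc : ContinuousOn D (Icc 0 rb)) (hDm : StrictMonoOn D (Icc 0 rb))
    (hD0 : D 0 = 0) (hDr : D rhat = Tmax)
    (hSc : ContinuousOn S (Icc 0 rb)) (hSa : StrictAntiOn S (Icc 0 rb))
    (hSb : S rb = 0) (hSr : S rhat = Tmax)
    (U : Set ℝ) (hUo : IsOpen U) (hU : Icc (0:ℝ) rb ⊆ U)
    (hD2 : ContDiffOn ℝ 2 D U) (hS2 : ContDiffOn ℝ 2 S U)
    (hD' : ∀ x ∈ Icc (0:ℝ) rb, 0 < deriv D x)
    (hD'' : ∀ x ∈ Icc (0:ℝ) rb, deriv (deriv D) x < 0)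
    (hS' : ∀ x ∈ Icc (0:ℝ) rb, deriv S x < 0)
    (hS'' : ∀ x ∈ Icc (0:ℝ) rb, deriv (deriv S) x < 0)
    (hd : ∀ T ∈ Icc (0:ℝ) Tmax, d T ∈ Icc (0:ℝ) rhat ∧ D (d T) = T)
    (hs : ∀ T ∈ Icc (0:ℝ) Tmax, s T ∈ Icc rhat rb ∧ S (s T) = T)
    (hmA : ∀ y ∈ Ioc (0:ℝ) rb, mA y ∈ Icc (0:ℝ) y ∧
      (∀ r ∈ Icc (0:ℝ) y, (y - r) * D r ≤ (y - mA y) * D (mA y)) ∧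
      (∀ m ∈ Icc (0:ℝ) y,
        (∀ r ∈ Icc (0:ℝ) y, (y - r) * D r ≤ (y - m) * D m) → m = mA y))
    (hsA : ∀ x ∈ Ico (0:ℝ) rb, sA x ∈ Icc x rb ∧
      (∀ r ∈ Icc x rb, (r - x) * S r ≤ (sA x - x) * S (sA x)) ∧
      (∀ m ∈ Icc x rb,
        (∀ r ∈ Icc x rb, (r - x) * S r ≤ (m - x) * S m) → m = sA x))
    (Tstar : ℝ) (hTstar : Tstar ∈ Ioo (0:ℝ) Tmax)
    (hmax : ∀ T ∈ Icc (0:ℝ) Tmax,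
      (s T - d T) * T ≤ (s Tstar - d Tstar) * Tstar) :
    0 < deriv (fun r => (s Tstar - r) * D r) (d Tstar) ∧
    deriv (fun r => (r - d Tstar) * S r) (s Tstar) < 0 ∧
    d Tstar ≤ mA (s Tstar) ∧ sA (d Tstar) ≤ s Tstar := by
  obtain ⟨hT0, hTm⟩ := hTstar
  have hTIcc : Tstar ∈ Icc (0:ℝ) Tmax := ⟨hT0.le, hTm.le⟩
  obtain ⟨hxmem, hDx⟩ := hd Tstar hTIcc
  obtain ⟨hymem, hSy⟩ := hs Tstar hTIcc
  set x := d Tstar with hxdef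
  set y := s Tstar with hydef
  -- basic memberships
  have hrhat_mem : rhat ∈ Icc (0:ℝ) rb := ⟨hrhat.le, hrb.le⟩
  have hx_rb : x ∈ Icc (0:ℝ) rb := ⟨hxmem.1, le_trans hxmem.2 hrb.le⟩
  have hy_rb : y ∈ Icc (0:ℝ) rb := ⟨le_trans hrhat.le hymem.1, hymem.2⟩
  have h0_rb : (0:ℝ) ∈ Icc (0:ℝ) rb := ⟨le_rfl, by linarith⟩
  have hrb_rb : rb ∈ Icc (0:ℝ) rb := ⟨by linarith, le_rfl⟩
  -- position facts
  have hx_pos : 0 < x := by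
    rcases eq_or_lt_of_le hxmem.1 with h | h
    · exfalso
      rw [← h, hD0] at hDx
      linarith
    · exact h
  have hx_lt_rhat : x < rhat := by
    by_contra h
    push_neg at h
    rcases eq_or_lt_of_le h with h' | h'
    · rw [h'] at hDr
      linarith [hDx, hDr]
    · have := hDm hrhat_mem hx_rb h'
      rw [hDr, hDx] at this
      linarith
  have hrhat_lt_y : rhat < y := by
    by_contra h
    push_neg at h
    rcases eq_or_lt_of_le h with h' | h'
    · rw [← h'] at hSr
      linarith [hSy, hSr]
    · have := hSa hy_rb hrhat_mem h'
      rw [hSy, hSr] at this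
      linarith
  have hy_lt_rb : y < rb := by
    by_contra h
    push_neg at h
    rcases eq_or_lt_of_le h with h' | h'
    · rw [h'] at hSb
      linarith [hSy, hSb]
    · have := hSa hrb_rb hy_rb h'
      rw [hSy, hSb] at this
      linarith
  have hy_pos : 0 < y := lt_trans hrhat hrhat_lt_y
  -- derivatives of D and S
  have hdiffD : ∀ z ∈ Icc (0:ℝ) rb, HasDerivAt D (deriv D z) z := fun z hz =>
    ((hD2.differentiableOn (by norm_num)).differentiableAt (hUo.mem_nhds (hU hz))).hasDerivAt
  have hdiffS : ∀ z ∈ Icc (0:ℝ) rb, HasDerivAt S (deriv S z) z := fun z hz =>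
    ((hS2.differentiableOn (by norm_num)).differentiableAt (hUo.mem_nhds (hU hz))).hasDerivAt
  set A := deriv D x with hAdef
  set B := deriv S y with hBdef
  have hA : 0 < A := hD' x hx_rb
  have hB : B < 0 := hS' y hy_rb
  have hA0 : A ≠ 0 := ne_of_gt hA
  have hB0 : B ≠ 0 := ne_of_lt hB
  -- continuity of d and s at Tstar
  have hIooT : Ioo (0:ℝ) Tmax ∈ nhds Tstar := Ioo_mem_nhds hT0 hTm
  have hdev : ∀ᶠ T in nhds Tstar, d T ∈ Icc (0:ℝ) rhat ∧ D (d T) = T := by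
    filter_upwards [hIooT] with T hT
    exact hd T (Ioo_subset_Icc_self hT)
  have hsev : ∀ᶠ T in nhds Tstar, s T ∈ Icc rhat rb ∧ S (s T) = T := by
    filter_upwards [hIooT] with T hT
    exact hs T (Ioo_subset_Icc_self hT)
  have hcontd : ContinuousAt d Tstar := by
    have hDm' : StrictMonoOn D (Icc 0 rhat) := hDm.mono (Icc_subset_Icc le_rfl hrb.le)
    have := contAt_of_rightInv (fi := d) hDm' (⟨hx_pos, hx_lt_rhat⟩ : x ∈ Ioo 0 rhat)
      (by rw [hDx]; exact hdev)
    rwa [hDx] at this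
  have hconts : ContinuousAt s Tstar := by
    have hF : StrictMonoOn (fun z => S (-z)) (Icc (-rb) (-rhat)) := by
      intro u hu v hv huv
      have hu' : -u ∈ Icc (0:ℝ) rb := ⟨by linarith [hu.2], by linarith [hu.1]⟩
      have hv' : -v ∈ Icc (0:ℝ) rb := ⟨by linarith [hv.2], by linarith [hv.1]⟩
      exact hSa hv' hu' (by linarith)
    have hy' : -y ∈ Ioo (-rb) (-rhat) := ⟨by linarith, by linarith⟩
    have hev : ∀ᶠ T in nhds (S (- -y)), -(s T) ∈ Icc (-rb) (-rhat) ∧ S (-(-(s T))) = T := by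
      rw [neg_neg, hSy]
      filter_upwards [hsev] with T hT
      exact ⟨⟨by linarith [hT.1.2], by linarith [hT.1.1]⟩, by rw [neg_neg]; exact hT.2⟩
    have h := contAt_of_rightInv (F := fun z => S (-z)) (fi := fun T => -(s T)) hF hy' hev
    simp only [neg_neg, hSy] at h
    have := h.neg
    convert this using 1
    ext T; simp
  -- derivatives of d and s at Tstar
  have hDx' : HasDerivAt D A x := hdiffD x hx_rb
  have hSy' : HasDerivAt S B y := hdiffS y hy_rb
  have hd' : HasDerivAt d A⁻¹ Tstar :=
    HasDerivAt.of_local_left_inverse (f := D) hcontd hDx' hA0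
      (by filter_upwards [hdev] with T hT using hT.2)
  have hs' : HasDerivAt s B⁻¹ Tstar :=
    HasDerivAt.of_local_left_inverse (f := S) hconts hSy' hB0
      (by filter_upwards [hsev] with T hT using hT.2)
  -- first-order condition
  have hπ : HasDerivAt (fun T => (s T - d T) * T)
      ((B⁻¹ - A⁻¹) * Tstar + (s Tstar - d Tstar) * 1) Tstar :=
    (hs'.sub hd').mul (hasDerivAt_id' (x := Tstar))
  have hlocmax : IsLocalMax (fun T => (s T - d T) * T) Tstar := by
    filter_upwards [Icc_mem_nhds hT0 hTm] with T hT using hmax T hT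
  have hFOC : (B⁻¹ - A⁻¹) * Tstar + (s Tstar - d Tstar) * 1 = 0 :=
    hlocmax.hasDerivAt_eq_zero hπ
  have hyx : y - x = (A⁻¹ - B⁻¹) * Tstar := by
    rw [← hxdef, ← hydef] at hFOC
    linarith [hFOC]
  -- the two key inequalities
  have key1 : Tstar < (y - x) * A := by
    have e1 : (y - x) * A = Tstar - B⁻¹ * Tstar * A := by
      rw [hyx]
      field_simp
    rw [e1]
    have h2 : B⁻¹ * Tstar * A < 0 :=
      mul_neg_of_neg_of_pos (mul_neg_of_neg_of_pos (inv_lt_zero.mpr hB) hT0) hA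
    linarith
  have key2 : Tstar + (y - x) * B < 0 := by
    have e2 : (y - x) * B = A⁻¹ * Tstar * B - Tstar := by
      rw [hyx]
      field_simp
    rw [e2]
    have h2 : A⁻¹ * Tstar * B < 0 :=
      mul_neg_of_pos_of_neg (mul_pos (inv_pos.mpr hA) hT0) hB
    linarith
  have hxy : x < y := by
    by_contra h
    push_neg at h
    have : (y - x) * A ≤ 0 := mul_nonpos_of_nonpos_of_nonneg (by linarith) hA.le
    linarith
  -- goal 1
  have hf : HasDerivAt (fun r => (y - r) * D r) ((0 - 1) * D x + (y - x) * A) x :=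
    ((hasDerivAt_const x y).sub (hasDerivAt_id x)).mul hDx'
  have goal1 : 0 < deriv (fun r => (y - r) * D r) x := by
    rw [hf.deriv, hDx]
    linarith
  -- goal 2
  have hg : HasDerivAt (fun r => (r - x) * S r) ((1 - 0) * S y + (y - x) * B) y :=
    ((hasDerivAt_id y).sub (hasDerivAt_const y x)).mul hSy'
  have goal2 : deriv (fun r => (r - x) * S r) y < 0 := by
    rw [hg.deriv, hSy]
    linarith
  -- strict antitonicity of deriv D and deriv S
  have hcontD' : ContinuousOn (deriv D) (Icc 0 rb) :=
    (hD2.continuousOn_deriv_of_isOpen hUo (by norm_num)).mono hU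
  have hcontS' : ContinuousOn (deriv S) (Icc 0 rb) :=
    (hS2.continuousOn_deriv_of_isOpen hUo (by norm_num)).mono hU
  have hDanti : StrictAntiOn (deriv D) (Icc 0 rb) :=
    strictAntiOn_of_deriv_neg (convex_Icc 0 rb) hcontD'
      (fun z hz => hD'' z (interior_subset hz))
  have hSanti : StrictAntiOn (deriv S) (Icc 0 rb) :=
    strictAntiOn_of_deriv_neg (convex_Icc 0 rb) hcontS'
      (fun z hz => hS'' z (interior_subset hz))
  -- goal 3
  have goal3 : x ≤ mA y := by
    have hyIoc : y ∈ Ioc (0:ℝ) rb := ⟨hy_pos, hymem.2⟩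
    obtain ⟨hmAmem, hmAmax, _⟩ := hmA y hyIoc
    by_contra hcon
    push_neg at hcon
    have hsubset : Icc (0:ℝ) x ⊆ Icc (0:ℝ) rb := Icc_subset_Icc le_rfl hx_rb.2
    have hcontf : ContinuousOn (fun r => (y - r) * D r) (Icc 0 x) :=
      (continuousOn_const.sub continuousOn_id).mul (hDc.mono hsubset)
    have hmono : StrictMonoOn (fun r => (y - r) * D r) (Icc 0 x) := by
      refine strictMonoOn_of_deriv_pos (convex_Icc 0 x) hcontf (fun r hr => ?_)
      rw [interior_Icc] at hr
      have hr_rb : r ∈ Icc (0:ℝ) rb := ⟨hr.1.le, le_trans hr.2.le hx_rb.2⟩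
      have hfr : HasDerivAt (fun r => (y - r) * D r)
          ((0 - 1) * D r + (y - r) * deriv D r) r :=
        ((hasDerivAt_const r y).sub (hasDerivAt_id r)).mul (hdiffD r hr_rb)
      rw [hfr.deriv]
      have h1 : D r < Tstar := by
        have := hDm hr_rb hx_rb hr.2
        rwa [hDx] at this
      have h2 : A < deriv D r := hDanti hr_rb hx_rb hr.2
      have h3a : (y - x) * A < (y - r) * A :=
        mul_lt_mul_of_pos_right (by linarith [hr.2]) hA
      have h3b : (y - r) * A < (y - r) * deriv D r :=
        mul_lt_mul_of_pos_left h2 (by linarith [hr.2])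
      have h3 : (y - x) * A < (y - r) * deriv D r := lt_trans h3a h3b
      linarith
    have hle : (y - x) * D x ≤ (y - mA y) * D (mA y) := hmAmax x ⟨hxmem.1, hxy.le⟩
    have hlt : (y - mA y) * D (mA y) < (y - x) * D x :=
      hmono ⟨hmAmem.1, hcon.le⟩ ⟨hxmem.1, le_rfl⟩ hcon
    linarith
  -- goal 4
  have goal4 : sA x ≤ y := by
    have hxIco : x ∈ Ico (0:ℝ) rb := ⟨hxmem.1, lt_of_le_of_lt hxmem.2 hrb⟩
    obtain ⟨hsAmem, hsAmax, _⟩ := hsA x hxIco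
    by_contra hcon
    push_neg at hcon
    have hsubset : Icc y rb ⊆ Icc (0:ℝ) rb := Icc_subset_Icc hy_rb.1 le_rfl
    have hcontg : ContinuousOn (fun r => (r - x) * S r) (Icc y rb) :=
      (continuousOn_id.sub continuousOn_const).mul (hSc.mono hsubset)
    have hanti : StrictAntiOn (fun r => (r - x) * S r) (Icc y rb) := by
      refine strictAntiOn_of_deriv_neg (convex_Icc y rb) hcontg (fun r hr => ?_)
      rw [interior_Icc] at hr
      have hr_rb : r ∈ Icc (0:ℝ) rb := ⟨le_trans hy_rb.1 hr.1.le, hr.2.le⟩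
      have hgr : HasDerivAt (fun r => (r - x) * S r)
          ((1 - 0) * S r + (r - x) * deriv S r) r :=
        ((hasDerivAt_id r).sub (hasDerivAt_const r x)).mul (hdiffS r hr_rb)
      rw [hgr.deriv]
      have h1 : S r < Tstar := by
        have := hSa hy_rb hr_rb hr.1
        rwa [hSy] at this
      have h2 : deriv S r < B := hSanti hy_rb hr_rb hr.1
      have h3a : (r - x) * deriv S r < (r - x) * B :=
        mul_lt_mul_of_pos_left h2 (by linarith [hr.1])
      have h3b : (r - x) * B < (y - x) * B :=
        mul_lt_mul_of_neg_right (by linarith [hr.1]) hB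
      have h3 : (r - x) * deriv S r < (y - x) * B := lt_trans h3a h3b
      linarith
    have hle : (y - x) * S y ≤ (sA x - x) * S (sA x) := hsAmax y ⟨hxy.le, hymem.2⟩
    have hlt : (sA x - x) * S (sA x) < (y - x) * S y :=
      hanti ⟨le_rfl, hymem.2⟩ ⟨hcon.le, hsAmem.2⟩ hcon
    linarith
  exact ⟨goal1, goal2, goal3, goal4⟩
end
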